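/- (Corollary 2) The FIE is RGAS if: (a) the system x⁺ = f(x,w), y = h(x) + v is i-IOSS with KL bound β(s,t) = c₁·s^{a₁}·(t+1)^{−b₁} for some constants c₁, a₁, b₁ > 0; (b) the infimum of the FIE is attainable at each time t when the cost is V_t(χ(0) − x̄₀, ω) = l_x(χ(0) − x̄₀)·(t+1)^{−b₂} + l_{wv}(ω, ν, t), where b₂ > 0, l_x and l_{wv} are continuous, c₂·|x|^{a₂} ≤ l_x(x) ≤ γ′ₓ(|x|) for all x ∈ ℝⁿ with constants c₂, a₂ > 0 and γ′ₓ a K∞-function, and γ̲_w(‖ω‖_{0:t−1}) + γ̲_v(‖ν‖_{0:t}) ≤ l_{wv}(ω, ν, t) ≤ γ_w(‖ω‖_{0:t−1}) + γ_v(‖ν‖_{0:t}) with γ̲_w, γ̲_v, γ_w, γ_v K∞-functions; and (c) a₂/b₂ ≥ a₁/b₁. -/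

import Mathlib

/-! The cost of the true data `(x₀, w, v)` at time `t` is at most
`ρ = γ'ₓ(|x₀ - x̄₀|)(t+1)^(-b₂) + γ_w(‖w‖) + γ_v(‖v‖)`, so by optimality the estimate
satisfies `c₂ |x̂₀ - x̄₀|^a₂ (t+1)^(-b₂) ≤ ρ`, `γ̲_w(‖ŵ‖) ≤ ρ` and `γ̲_v(‖ν̂‖) ≤ ρ`.
In the i-IOSS bound for the two trajectories, the triangle inequality separates the true
quantities from the estimated ones. The exponent condition `a₁/b₁ ≤ a₂/b₂` turns the first of
the three cost bounds into `|x̂₀ - x̄₀|^a₁ (t+1)^(-b₁) ≤ (ρ/c₂)^(a₁/a₂)` uniformly in `t`, so the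
estimated quantities contribute at most `Θ(ρ)` for a K-function `Θ`. Splitting `Θ(ρ)` over the
three summands of `ρ` gives the RGAS bound, whose initial-state part decays thanks to the
discount `(t+1)^(-b₂)` in `ρ`. -/

open Filter Topology

/-- A K-function: continuous on [0,∞), strictly increasing on [0,∞), zero at zero. -/
def IsKFun (α : ℝ → ℝ) : Prop :=
  ContinuousOn α (Set.Ici 0) ∧ StrictMonoOn α (Set.Ici 0) ∧ α 0 = 0

/-- A K∞-function: a K-function tending to ∞ at ∞. -/
def IsKInftyFun (α : ℝ → ℝ) : Prop :=
  IsKFun α ∧ Tendsto α atTop atTop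

/-- An L-function: continuous on [0,∞), nonincreasing on [0,∞), tending to 0 at ∞. -/
def IsLFun (φ : ℝ → ℝ) : Prop :=
  ContinuousOn φ (Set.Ici 0) ∧ AntitoneOn φ (Set.Ici 0) ∧ Tendsto φ atTop (𝓝 0)

/-- A KL-function. -/
def IsKLFun (β : ℝ → ℝ → ℝ) : Prop :=
  (∀ t, 0 ≤ t → IsKFun fun s => β s t) ∧ (∀ s, 0 ≤ s → IsLFun fun t => β s t)

/-- Solution of the discrete-time system `x⁺ = f(x,w)`. -/
def traj {X W : Type*} (f : X → W → X) (x0 : X) (w : ℕ → W) : ℕ → X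
  | 0 => x0
  | t + 1 => f (traj f x0 w t) (w t)

/-- `seqSup z m = max_{0 ≤ i < m} ‖z i‖` (0 when the index range is empty), so
`‖z‖_{0:t-1} = seqSup z t` and `‖z‖_{0:t} = seqSup z (t+1)`. -/
noncomputable def seqSup {E : Type*} [SeminormedAddGroup E] (z : ℕ → E) (m : ℕ) : ℝ :=
  (((Finset.range m).sup fun i => ‖z i‖₊ : NNReal) : ℝ)

open Set Real

namespace IsKFun

variable {α β : ℝ → ℝ}

theorem nonneg (hα : IsKFun α) {s : ℝ} (hs : 0 ≤ s) : 0 ≤ α s :=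
  hα.2.2 ▸ hα.2.1.monotoneOn self_mem_Ici hs hs

theorem mono (hα : IsKFun α) {x y : ℝ} (hx : 0 ≤ x) (hxy : x ≤ y) : α x ≤ α y :=
  hα.2.1.monotoneOn hx (hx.trans hxy) hxy

theorem add (hα : IsKFun α) (hβ : IsKFun β) : IsKFun fun s => α s + β s :=
  ⟨hα.1.add hβ.1, hα.2.1.add hβ.2.1, by simp [hα.2.2, hβ.2.2]⟩

theorem comp (hα : IsKFun α) (hβ : IsKFun β) : IsKFun fun s => α (β s) :=
  have hmaps : MapsTo β (Ici 0) (Ici 0) := fun _ hx => hβ.nonneg hx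
  ⟨hα.1.comp hβ.1 hmaps, hα.2.1.comp hβ.2.1 hmaps, by simp [hβ.2.2, hα.2.2]⟩

theorem const_mul (hα : IsKFun α) {c : ℝ} (hc : 0 < c) : IsKFun fun s => c * α s :=
  ⟨continuousOn_const.mul hα.1,
    fun _ hx _ hy hxy => mul_lt_mul_of_pos_left (hα.2.1 hx hy hxy) hc, by simp [hα.2.2]⟩

theorem mul_const (hα : IsKFun α) {c : ℝ} (hc : 0 < c) : IsKFun fun s => α s * c :=
  ⟨hα.1.mul continuousOn_const,
    fun _ hx _ hy hxy => mul_lt_mul_of_pos_right (hα.2.1 hx hy hxy) hc, by simp [hα.2.2]⟩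

theorem le_add_add (hα : IsKFun α) {x y : ℝ} (hx : 0 ≤ x) (hy : 0 ≤ y) :
    α (x + y) ≤ α (2 * x) + α (2 * y) := by
  rcases le_total x y with hxy | hxy
  · linarith [hα.mono (by positivity) (by linarith : x + y ≤ 2 * y),
      hα.nonneg (by positivity : 0 ≤ 2 * x)]
  · linarith [hα.mono (by positivity) (by linarith : x + y ≤ 2 * x),
      hα.nonneg (by positivity : 0 ≤ 2 * y)]

theorem le_add_add_add (hα : IsKFun α) {x y z : ℝ} (hx : 0 ≤ x) (hy : 0 ≤ y) (hz : 0 ≤ z) :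
    α (x + y + z) ≤ α (3 * x) + α (3 * y) + α (3 * z) := by
  have hm : x + y + z ≤ 3 * max x (max y z) := by
    linarith [le_max_left x (max y z), le_max_right x (max y z), le_max_left y z,
      le_max_right y z]
  have hsum := hα.mono (by positivity) hm
  have := hα.nonneg (by positivity : 0 ≤ 3 * x)
  have := hα.nonneg (by positivity : 0 ≤ 3 * y)
  have := hα.nonneg (by positivity : 0 ≤ 3 * z)
  rcases max_choice x (max y z) with hm | hm <;> rw [hm] at hsum
  · linarith
  · rcases max_choice y z with hm' | hm' <;> rw [hm'] at hsum <;> linarith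

end IsKFun

theorem isKFun_id : IsKFun fun s => s :=
  ⟨continuousOn_id, strictMonoOn_id, rfl⟩

theorem isKFun_rpow {a : ℝ} (ha : 0 < a) : IsKFun fun s => s ^ a :=
  ⟨continuousOn_id.rpow_const fun _ _ => Or.inr ha.le,
    fun _ hx _ _ hxy => rpow_lt_rpow hx hxy ha, zero_rpow ha.ne'⟩

theorem IsKInftyFun.exists_inverse_bound {γ : ℝ → ℝ} (hγ : IsKInftyFun γ) :
    ∃ ψ : ℝ → ℝ, IsKFun ψ ∧ ∀ x r, 0 ≤ x → γ x ≤ r → x ≤ ψ r := by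
  obtain ⟨⟨hcont, hmono, h0⟩, htop⟩ := hγ
  -- `ψ` is the inverse of the increasing homeomorphism `g` of `ℝ` extending `γ` by the identity
  set g : ℝ → ℝ := fun x => γ (max x 0) + min x 0
  have hg : ∀ x, 0 ≤ x → g x = γ x := fun x hx => by simp [g, hx]
  have hg_cont : Continuous g :=
    (hcont.comp_continuous (continuous_id.max continuous_const) fun x => le_max_right x 0).add
      (continuous_id.min continuous_const)
  have hg_mono : StrictMono g := by
    intro x y hxy
    rcases le_or_gt y 0 with hy | hy
    · simp only [g, max_eq_right hy, max_eq_right (hxy.le.trans hy), min_eq_left hy,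
        min_eq_left (hxy.le.trans hy)]
      linarith
    · have := hmono (le_max_right x 0) hy.le (max_lt hxy hy)
      have := min_le_min_right 0 hxy.le
      simp only [g, max_eq_left hy.le]
      linarith
  have hg_top : Tendsto g atTop atTop :=
    htop.congr' (eventually_ge_atTop 0 |>.mono fun x hx => (hg x hx).symm)
  have hg_bot : Tendsto g atBot atBot :=
    tendsto_id.congr' (eventually_le_atBot 0 |>.mono fun x hx => by simp [g, hx, h0])
  set e := hg_mono.orderIsoOfSurjective g (hg_cont.surjective hg_top hg_bot)
  refine ⟨e.symm, ⟨e.symm.continuous.continuousOn, e.symm.strictMono.strictMonoOn _, ?_⟩, ?_⟩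
  · rw [e.symm_apply_eq]
    simp [e, g, h0]
  · intro x r hx hr
    rw [e.le_symm_apply]
    simpa [e, hg x hx] using hr

theorem IsLFun.add {φ ψ : ℝ → ℝ} (hφ : IsLFun φ) (hψ : IsLFun ψ) : IsLFun fun t => φ t + ψ t :=
  ⟨hφ.1.add hψ.1, hφ.2.1.add hψ.2.1, by simpa using hφ.2.2.add hψ.2.2⟩

theorem isLFun_add_one_rpow_neg {b : ℝ} (hb : 0 < b) : IsLFun fun t => (t + 1) ^ (-b) :=
  ⟨(continuousOn_id.add continuousOn_const).rpow_const fun x hx =>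
      Or.inl (by linarith [mem_Ici.1 hx] : (0 : ℝ) < x + 1).ne',
    fun x hx _ _ hxy => rpow_le_rpow_of_nonpos (by linarith [mem_Ici.1 hx]) (by linarith)
      (by linarith),
    (tendsto_rpow_neg_atTop hb).comp (tendsto_atTop_add_const_right atTop 1 tendsto_id)⟩

theorem IsKLFun.add {β₁ β₂ : ℝ → ℝ → ℝ} (hβ₁ : IsKLFun β₁) (hβ₂ : IsKLFun β₂) :
    IsKLFun fun s t => β₁ s t + β₂ s t :=
  ⟨fun t ht => (hβ₁.1 t ht).add (hβ₂.1 t ht), fun s hs => (hβ₁.2 s hs).add (hβ₂.2 s hs)⟩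

theorem isKLFun_mul {κ φ : ℝ → ℝ} (hκ : IsKFun κ) (hφ : IsLFun φ)
    (hφ_pos : ∀ t, 0 ≤ t → 0 < φ t) : IsKLFun fun s t => κ s * φ t :=
  ⟨fun t ht => hκ.mul_const (hφ_pos t ht), fun s hs =>
    ⟨continuousOn_const.mul hφ.1,
      fun _ hx _ hy hxy => mul_le_mul_of_nonneg_left (hφ.2.1 hx hy hxy) (hκ.nonneg hs),
      by simpa using hφ.2.2.const_mul (κ s)⟩⟩

theorem IsKFun.comp_isKLFun {θ : ℝ → ℝ} {β : ℝ → ℝ → ℝ} (hθ : IsKFun θ) (hβ : IsKLFun β) :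
    IsKLFun fun s t => θ (β s t) := by
  refine ⟨fun t ht => hθ.comp (hβ.1 t ht), fun s hs => ?_⟩
  have hnn : MapsTo (β s) (Ici 0) (Ici 0) := fun t ht => (hβ.1 t ht).nonneg hs
  have hlim : Tendsto (β s) atTop (𝓝[Ici 0] 0) :=
    tendsto_nhdsWithin_iff.2 ⟨(hβ.2 s hs).2.2, eventually_ge_atTop 0 |>.mono hnn⟩
  refine ⟨hθ.1.comp (hβ.2 s hs).1 hnn,
    fun _ hx _ hy hxy => hθ.mono (hnn hy) ((hβ.2 s hs).2.1 hx hy hxy), ?_⟩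
  have := (hθ.1 0 self_mem_Ici).tendsto.comp hlim
  rw [hθ.2.2] at this
  exact this

theorem rpow_mul_rpow_neg_le {a₁ a₂ b₁ b₂ c D T ρ : ℝ} (ha₁ : 0 < a₁) (ha₂ : 0 < a₂)
    (hb₁ : 0 < b₁) (hb₂ : 0 < b₂) (hab : a₁ / b₁ ≤ a₂ / b₂) (hc : 0 < c) (hD : 0 ≤ D)
    (hT : 1 ≤ T) (h : c * D ^ a₂ * T ^ (-b₂) ≤ ρ) :
    D ^ a₁ * T ^ (-b₁) ≤ (ρ / c) ^ (a₁ / a₂) := by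
  have hT₀ : 0 < T := by linarith
  have hρ : 0 ≤ ρ := le_trans (by positivity) h
  have hbq : b₂ * (a₁ / a₂) ≤ b₁ := by
    rw [div_le_div_iff₀ hb₁ hb₂] at hab
    rw [mul_div_assoc', div_le_iff₀ ha₂]
    linarith
  have hDa₂ : D ^ a₂ ≤ ρ / c * T ^ b₂ := by
    have := mul_le_mul_of_nonneg_right h (rpow_nonneg hT₀.le b₂)
    rw [mul_assoc, ← rpow_add hT₀, neg_add_cancel, rpow_zero, mul_one] at this
    rw [div_mul_eq_mul_div, le_div_iff₀ hc]
    linarith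
  calc D ^ a₁ * T ^ (-b₁) = (D ^ a₂) ^ (a₁ / a₂) * T ^ (-b₁) := by
        rw [← rpow_mul hD, mul_div_cancel₀ _ ha₂.ne']
    _ ≤ (ρ / c * T ^ b₂) ^ (a₁ / a₂) * T ^ (-b₁) := by
        gcongr
    _ = (ρ / c) ^ (a₁ / a₂) * T ^ (b₂ * (a₁ / a₂) + -b₁) := by
        rw [mul_rpow (by positivity) (by positivity), ← rpow_mul hT₀.le, rpow_add hT₀, mul_assoc]
    _ ≤ (ρ / c) ^ (a₁ / a₂) :=
        mul_le_of_le_one_right (by positivity) (rpow_le_one_of_one_le_of_nonpos hT (by linarith))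

section Trajectories

variable {X W Y : Type*} [SeminormedAddCommGroup X] [SeminormedAddCommGroup W]
  [SeminormedAddCommGroup Y]

theorem seqSup_nonneg (z : ℕ → Y) (m : ℕ) : 0 ≤ seqSup z m :=
  NNReal.coe_nonneg _

theorem seqSup_sub_le (z₁ z₂ : ℕ → Y) (m : ℕ) :
    seqSup (fun i => z₁ i - z₂ i) m ≤ seqSup z₁ m + seqSup z₂ m := by
  simp only [seqSup, ← NNReal.coe_add, NNReal.coe_le_coe]
  refine Finset.sup_le fun i hi => (nnnorm_sub_le _ _).trans ?_
  exact add_le_add (Finset.le_sup (f := fun i => ‖z₁ i‖₊) hi)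
    (Finset.le_sup (f := fun i => ‖z₂ i‖₊) hi)

theorem traj_sub_le_of_iIOSS {f : X → W → X} {h : X → Y} {β : ℝ → ℕ → ℝ} {α₁ α₂ : ℝ → ℝ}
    (hβ : ∀ t, IsKFun fun s => β s t) (hα₁ : IsKFun α₁) (hα₂ : IsKFun α₂)
    (hIOSS : ∀ (x₀₁ x₀₂ : X) (w₁ w₂ : ℕ → W) (t : ℕ),
      ‖traj f x₀₁ w₁ t - traj f x₀₂ w₂ t‖ ≤ β ‖x₀₁ - x₀₂‖ t
        + α₁ (seqSup (fun i => w₁ i - w₂ i) t)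
        + α₂ (seqSup (fun i => h (traj f x₀₁ w₁ i) - h (traj f x₀₂ w₂ i)) (t + 1)))
    (x₀ xbar₀ xhat₀ : X) (w ω : ℕ → W) (v : ℕ → Y) (t : ℕ) :
    ‖traj f x₀ w t - traj f xhat₀ ω t‖ ≤
      β (2 * ‖x₀ - xbar₀‖) t + β (2 * ‖xhat₀ - xbar₀‖) t
        + α₁ (2 * seqSup w t) + α₁ (2 * seqSup ω t)
        + α₂ (2 * seqSup (fun i => (h (traj f x₀ w i) + v i) - h (traj f xhat₀ ω i)) (t + 1))
        + α₂ (2 * seqSup v (t + 1)) := by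
  set ν := fun i => (h (traj f x₀ w i) + v i) - h (traj f xhat₀ ω i)
  have hx : β ‖x₀ - xhat₀‖ t ≤ β (2 * ‖x₀ - xbar₀‖) t + β (2 * ‖xhat₀ - xbar₀‖) t :=
    ((hβ t).mono (norm_nonneg _)
      (norm_sub_rev xhat₀ xbar₀ ▸ norm_sub_le_norm_sub_add_norm_sub _ _ _)).trans
        ((hβ t).le_add_add (norm_nonneg _) (norm_nonneg _))
  have hw :
      α₁ (seqSup (fun i => w i - ω i) t) ≤ α₁ (2 * seqSup w t) + α₁ (2 * seqSup ω t) :=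
    (hα₁.mono (seqSup_nonneg _ _) (seqSup_sub_le w ω t)).trans
      (hα₁.le_add_add (seqSup_nonneg _ _) (seqSup_nonneg _ _))
  have hy_eq : (fun i => h (traj f x₀ w i) - h (traj f xhat₀ ω i)) = fun i => ν i - v i := by
    funext i
    simp only [ν]
    abel
  have hy : α₂ (seqSup (fun i => h (traj f x₀ w i) - h (traj f xhat₀ ω i)) (t + 1)) ≤
      α₂ (2 * seqSup ν (t + 1)) + α₂ (2 * seqSup v (t + 1)) := by
    rw [hy_eq]
    exact (hα₂.mono (seqSup_nonneg _ _) (seqSup_sub_le ν v _)).trans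
      (hα₂.le_add_add (seqSup_nonneg _ _) (seqSup_nonneg _ _))
  linarith [hIOSS x₀ xhat₀ w ω t]

theorem fie_error_le_of_cost_le {f : X → W → X} {h : X → Y} {β ℓ : ℝ → ℕ → ℝ}
    {α₁ α₂ θ γw γv ψw ψv : ℝ → ℝ}
    (hβ : ∀ t, IsKFun fun s => β s t) (hα₁ : IsKFun α₁) (hα₂ : IsKFun α₂)
    (hIOSS : ∀ (x₀₁ x₀₂ : X) (w₁ w₂ : ℕ → W) (t : ℕ),
      ‖traj f x₀₁ w₁ t - traj f x₀₂ w₂ t‖ ≤ β ‖x₀₁ - x₀₂‖ t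
        + α₁ (seqSup (fun i => w₁ i - w₂ i) t)
        + α₂ (seqSup (fun i => h (traj f x₀₁ w₁ i) - h (traj f x₀₂ w₂ i)) (t + 1)))
    (hℓ : ∀ D t, 0 ≤ D → 0 ≤ ℓ D t) (hθ : ∀ D t r, 0 ≤ D → ℓ D t ≤ r → β (2 * D) t ≤ θ r)
    (hγw : IsKFun γw) (hγv : IsKFun γv)
    (hψw : ∀ x r, 0 ≤ x → γw x ≤ r → x ≤ ψw r) (hψv : ∀ x r, 0 ≤ x → γv x ≤ r → x ≤ ψv r)
    (x₀ xbar₀ xhat₀ : X) (w ω : ℕ → W) (v : ℕ → Y) (t : ℕ) (ρ : ℝ)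
    (hcost : ℓ ‖xhat₀ - xbar₀‖ t + γw (seqSup ω t)
      + γv (seqSup (fun i => (h (traj f x₀ w i) + v i) - h (traj f xhat₀ ω i)) (t + 1)) ≤ ρ) :
    ‖traj f x₀ w t - traj f xhat₀ ω t‖ ≤
      β (2 * ‖x₀ - xbar₀‖) t + α₁ (2 * seqSup w t) + α₂ (2 * seqSup v (t + 1))
        + (θ ρ + α₁ (2 * ψw ρ) + α₂ (2 * ψv ρ)) := by
  set ν := fun i => (h (traj f x₀ w i) + v i) - h (traj f xhat₀ ω i)
  have hℓ₀ := hℓ ‖xhat₀ - xbar₀‖ t (norm_nonneg _)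
  have hγw₀ := hγw.nonneg (seqSup_nonneg ω t)
  have hγv₀ := hγv.nonneg (seqSup_nonneg ν (t + 1))
  have hxhat : β (2 * ‖xhat₀ - xbar₀‖) t ≤ θ ρ := hθ _ t ρ (norm_nonneg _) (by linarith)
  have hω : 2 * seqSup ω t ≤ 2 * ψw ρ := by
    linarith [hψw (seqSup ω t) ρ (seqSup_nonneg ω t) (by linarith)]
  have hν : 2 * seqSup ν (t + 1) ≤ 2 * ψv ρ := by
    linarith [hψv (seqSup ν (t + 1)) ρ (seqSup_nonneg ν (t + 1)) (by linarith)]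
  linarith [traj_sub_le_of_iIOSS hβ hα₁ hα₂ hIOSS x₀ xbar₀ xhat₀ w ω v t,
    hα₁.mono (by linarith [seqSup_nonneg ω t]) hω,
    hα₂.mono (by linarith [seqSup_nonneg ν (t + 1)]) hν]

end Trajectories

open Real in
theorem fie_rgas_polynomial_general
    (n g p : ℕ)
    (f : EuclideanSpace ℝ (Fin n) → EuclideanSpace ℝ (Fin g) → EuclideanSpace ℝ (Fin n))
    (h : EuclideanSpace ℝ (Fin n) → EuclideanSpace ℝ (Fin p))
    -- (a) i-IOSS with KL bound β(s,t) = c₁·s^{a₁}·(t+1)^{-b₁}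
    (c₁ a₁ b₁ : ℝ) (hc₁ : 0 < c₁) (ha₁ : 0 < a₁) (hb₁ : 0 < b₁)
    (α₁ α₂ : ℝ → ℝ) (hα₁ : IsKFun α₁) (hα₂ : IsKFun α₂)
    (hIOSS : ∀ (x01 x02 : EuclideanSpace ℝ (Fin n)) (w1 w2 : ℕ → EuclideanSpace ℝ (Fin g))
      (t : ℕ),
      ‖traj f x01 w1 t - traj f x02 w2 t‖ ≤
        c₁ * ‖x01 - x02‖ ^ a₁ * ((t : ℝ) + 1) ^ (-b₁)
          + α₁ (seqSup (fun i => w1 i - w2 i) t)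
          + α₂ (seqSup (fun i => h (traj f x01 w1 i) - h (traj f x02 w2 i)) (t + 1)))
    -- (b) the structure and bounds of the cost function
    (c₂ a₂ b₂ : ℝ) (hc₂ : 0 < c₂) (ha₂ : 0 < a₂) (hb₂ : 0 < b₂)
    (lx : EuclideanSpace ℝ (Fin n) → ℝ)
    (lwv : (ℕ → EuclideanSpace ℝ (Fin g)) → (ℕ → EuclideanSpace ℝ (Fin p)) → ℕ → ℝ)
    (γ'x : ℝ → ℝ) (hγ'x : IsKInftyFun γ'x)
    (hlx : ∀ x : EuclideanSpace ℝ (Fin n), c₂ * ‖x‖ ^ a₂ ≤ lx x ∧ lx x ≤ γ'x ‖x‖)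
    (γₗw γₗv γᵤw γᵤv : ℝ → ℝ)
    (hγₗw : IsKInftyFun γₗw) (hγₗv : IsKInftyFun γₗv)
    (hγᵤw : IsKInftyFun γᵤw) (hγᵤv : IsKInftyFun γᵤv)
    (hlwv : ∀ (ω : ℕ → EuclideanSpace ℝ (Fin g)) (ν : ℕ → EuclideanSpace ℝ (Fin p)) (t : ℕ),
      γₗw (seqSup ω t) + γₗv (seqSup ν (t + 1)) ≤ lwv ω ν t ∧
      lwv ω ν t ≤ γᵤw (seqSup ω t) + γᵤv (seqSup ν (t + 1)))
    -- (c) the exponent condition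
    (hab : a₂ / b₂ ≥ a₁ / b₁) :
    -- RGAS of the FIE with cost V_t(χ(0)-x̄₀, ω) = l_x(χ(0)-x̄₀)·(t+1)^{-b₂} + l_{wv}(ω,ν,t)
    ∃ βx : ℝ → ℝ → ℝ, ∃ αw αv : ℝ → ℝ, IsKLFun βx ∧ IsKFun αw ∧ IsKFun αv ∧
      ∀ (x0 xbar0 : EuclideanSpace ℝ (Fin n)) (w : ℕ → EuclideanSpace ℝ (Fin g))
        (v : ℕ → EuclideanSpace ℝ (Fin p)),
        (∃ Mw : ℝ, ∀ i, ‖w i‖ ≤ Mw) → (∃ Mv : ℝ, ∀ i, ‖v i‖ ≤ Mv) →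
        ∀ (xhat0 : ℕ → EuclideanSpace ℝ (Fin n)) (what : ℕ → ℕ → EuclideanSpace ℝ (Fin g)),
          -- (b) the infimum is attainable at (xhat0 t, what t); in particular the cost
          -- there is no larger than at the true (x0, w), with fitted noises
          -- ν(i) = h(x(i; x0, w)) + v(i) - h(x(i; χ0, ω))
          (∀ t : ℕ,
            lx (xhat0 t - xbar0) * ((t : ℝ) + 1) ^ (-b₂)
              + lwv (what t)
                  (fun i => (h (traj f x0 w i) + v i) - h (traj f (xhat0 t) (what t) i)) t
            ≤ lx (x0 - xbar0) * ((t : ℝ) + 1) ^ (-b₂) + lwv w v t) →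
          ∀ t : ℕ,
            ‖traj f x0 w t - traj f (xhat0 t) (what t) t‖ ≤
              βx ‖x0 - xbar0‖ t + αw (seqSup w t) + αv (seqSup v (t + 1)) := by
  obtain ⟨ψw, hψw, hψw_le⟩ := hγₗw.exists_inverse_bound
  obtain ⟨ψv, hψv, hψv_le⟩ := hγₗv.exists_inverse_bound
  have hq : 0 < a₁ / a₂ := div_pos ha₁ ha₂
  set Θ : ℝ → ℝ :=
    fun r => c₁ * 2 ^ a₁ * (r / c₂) ^ (a₁ / a₂) + α₁ (2 * ψw r) + α₂ (2 * ψv r)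
  have hΘ : IsKFun Θ :=
    ((((isKFun_rpow hq).comp (isKFun_id.mul_const (inv_pos.2 hc₂))).const_mul (by positivity)).add
      (hα₁.comp (hψw.const_mul two_pos))).add (hα₂.comp (hψv.const_mul two_pos))
  have hθ : ∀ D (t : ℕ) r, 0 ≤ D → c₂ * D ^ a₂ * ((t : ℝ) + 1) ^ (-b₂) ≤ r →
      c₁ * (2 * D) ^ a₁ * ((t : ℝ) + 1) ^ (-b₁) ≤ c₁ * 2 ^ a₁ * (r / c₂) ^ (a₁ / a₂) :=
    fun D t r hD hr => calc
      _ = c₁ * 2 ^ a₁ * (D ^ a₁ * ((t : ℝ) + 1) ^ (-b₁)) := by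
        rw [mul_rpow two_pos.le hD]; ring
      _ ≤ _ := by
        gcongr
        exact rpow_mul_rpow_neg_le ha₁ ha₂ hb₁ hb₂ hab hc₂ hD
          (le_add_of_nonneg_left t.cast_nonneg) hr
  refine ⟨fun s t => c₁ * (2 * s) ^ a₁ * (t + 1) ^ (-b₁) + Θ (3 * γ'x s * (t + 1) ^ (-b₂)),
    fun r => Θ (3 * γᵤw r) + α₁ (2 * r), fun r => Θ (3 * γᵤv r) + α₂ (2 * r), ?_, ?_, ?_, ?_⟩
  · exact (isKLFun_mul (((isKFun_rpow ha₁).comp (isKFun_id.const_mul two_pos)).const_mul hc₁)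
      (isLFun_add_one_rpow_neg hb₁) fun t ht => by positivity).add
      (hΘ.comp_isKLFun (isKLFun_mul (hγ'x.1.const_mul three_pos) (isLFun_add_one_rpow_neg hb₂)
        fun t ht => by positivity))
  · exact (hΘ.comp (hγᵤw.1.const_mul three_pos)).add (hα₁.comp (isKFun_id.const_mul two_pos))
  · exact (hΘ.comp (hγᵤv.1.const_mul three_pos)).add (hα₂.comp (isKFun_id.const_mul two_pos))
  intro x0 xbar0 w v _ _ xhat0 what hopt t
  set d₂ := ((t : ℝ) + 1) ^ (-b₂)
  have hd₂ : 0 ≤ d₂ := by positivity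
  set ν := fun i => (h (traj f x0 w i) + v i) - h (traj f (xhat0 t) (what t) i)
  have hcost :
      c₂ * ‖xhat0 t - xbar0‖ ^ a₂ * d₂ + γₗw (seqSup (what t) t) + γₗv (seqSup ν (t + 1))
        ≤ γ'x ‖x0 - xbar0‖ * d₂ + γᵤw (seqSup w t) + γᵤv (seqSup v (t + 1)) := by
    linarith [hopt t, mul_le_mul_of_nonneg_right (hlx (xhat0 t - xbar0)).1 hd₂,
      mul_le_mul_of_nonneg_right (hlx (x0 - xbar0)).2 hd₂, (hlwv (what t) ν t).1,
      (hlwv w v t).2]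
  have hΘ_split :=
    hΘ.le_add_add_add (mul_nonneg (hγ'x.1.nonneg (norm_nonneg (x0 - xbar0))) hd₂)
      (hγᵤw.1.nonneg (seqSup_nonneg w t)) (hγᵤv.1.nonneg (seqSup_nonneg v (t + 1)))
  simp only [← mul_assoc] at hΘ_split
  refine (fie_error_le_of_cost_le (ℓ := fun D (t : ℕ) => c₂ * D ^ a₂ * ((t : ℝ) + 1) ^ (-b₂))
    (fun t => ((isKFun_rpow ha₁).const_mul hc₁).mul_const (by positivity)) hα₁ hα₂ hIOSS
    (fun D t hD => by positivity) hθ hγₗw.1 hγₗv.1 hψw_le hψv_le x0 xbar0 (xhat0 t) w (what t) v t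
    _ hcost).trans ?_
  dsimp only
  linarith

open Real in
/-- (Corollary 2.)  The FIE with polynomially discounted initial-state cost is
RGAS when the system is i-IOSS with polynomial KL bound and `a₂/b₂ ≥ a₁/b₁`. -/
theorem fie_rgas_polynomial
    (n g p : ℕ)
    (f : EuclideanSpace ℝ (Fin n) → EuclideanSpace ℝ (Fin g) → EuclideanSpace ℝ (Fin n))
    (h : EuclideanSpace ℝ (Fin n) → EuclideanSpace ℝ (Fin p))
    (hf : Continuous fun q : EuclideanSpace ℝ (Fin n) × EuclideanSpace ℝ (Fin g) => f q.1 q.2)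
    (hh : Continuous h)
    -- (a) i-IOSS with KL bound β(s,t) = c₁·s^{a₁}·(t+1)^{-b₁}
    (c₁ a₁ b₁ : ℝ) (hc₁ : 0 < c₁) (ha₁ : 0 < a₁) (hb₁ : 0 < b₁)
    (α₁ α₂ : ℝ → ℝ) (hα₁ : IsKFun α₁) (hα₂ : IsKFun α₂)
    (hIOSS : ∀ (x01 x02 : EuclideanSpace ℝ (Fin n)) (w1 w2 : ℕ → EuclideanSpace ℝ (Fin g))
      (t : ℕ),
      ‖traj f x01 w1 t - traj f x02 w2 t‖ ≤
        c₁ * ‖x01 - x02‖ ^ a₁ * ((t : ℝ) + 1) ^ (-b₁)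
          + α₁ (seqSup (fun i => w1 i - w2 i) t)
          + α₂ (seqSup (fun i => h (traj f x01 w1 i) - h (traj f x02 w2 i)) (t + 1)))
    -- (b) the structure and bounds of the cost function
    (c₂ a₂ b₂ : ℝ) (hc₂ : 0 < c₂) (ha₂ : 0 < a₂) (hb₂ : 0 < b₂)
    (lx : EuclideanSpace ℝ (Fin n) → ℝ)
    (lwv : (ℕ → EuclideanSpace ℝ (Fin g)) → (ℕ → EuclideanSpace ℝ (Fin p)) → ℕ → ℝ)
    (hlx_cont : Continuous lx)
    (hlwv_cont : ∀ t : ℕ, Continuous fun q :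
      (ℕ → EuclideanSpace ℝ (Fin g)) × (ℕ → EuclideanSpace ℝ (Fin p)) => lwv q.1 q.2 t)
    (γ'x : ℝ → ℝ) (hγ'x : IsKInftyFun γ'x)
    (hlx : ∀ x : EuclideanSpace ℝ (Fin n), c₂ * ‖x‖ ^ a₂ ≤ lx x ∧ lx x ≤ γ'x ‖x‖)
    (γₗw γₗv γᵤw γᵤv : ℝ → ℝ)
    (hγₗw : IsKInftyFun γₗw) (hγₗv : IsKInftyFun γₗv)
    (hγᵤw : IsKInftyFun γᵤw) (hγᵤv : IsKInftyFun γᵤv)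
    (hlwv : ∀ (ω : ℕ → EuclideanSpace ℝ (Fin g)) (ν : ℕ → EuclideanSpace ℝ (Fin p)) (t : ℕ),
      γₗw (seqSup ω t) + γₗv (seqSup ν (t + 1)) ≤ lwv ω ν t ∧
      lwv ω ν t ≤ γᵤw (seqSup ω t) + γᵤv (seqSup ν (t + 1)))
    -- (c) the exponent condition
    (hab : a₂ / b₂ ≥ a₁ / b₁) :
    -- RGAS of the FIE with cost V_t(χ(0)-x̄₀, ω) = l_x(χ(0)-x̄₀)·(t+1)^{-b₂} + l_{wv}(ω,ν,t)
    ∃ βx : ℝ → ℝ → ℝ, ∃ αw αv : ℝ → ℝ, IsKLFun βx ∧ IsKFun αw ∧ IsKFun αv ∧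
      ∀ (x0 xbar0 : EuclideanSpace ℝ (Fin n)) (w : ℕ → EuclideanSpace ℝ (Fin g))
        (v : ℕ → EuclideanSpace ℝ (Fin p)),
        (∃ Mw : ℝ, ∀ i, ‖w i‖ ≤ Mw) → (∃ Mv : ℝ, ∀ i, ‖v i‖ ≤ Mv) →
        ∀ (xhat0 : ℕ → EuclideanSpace ℝ (Fin n)) (what : ℕ → ℕ → EuclideanSpace ℝ (Fin g)),
          -- (b) the infimum is attainable at (xhat0 t, what t); in particular the cost
          -- there is no larger than at the true (x0, w), with fitted noises
          -- ν(i) = h(x(i; x0, w)) + v(i) - h(x(i; χ0, ω))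
          (∀ t : ℕ,
            lx (xhat0 t - xbar0) * ((t : ℝ) + 1) ^ (-b₂)
              + lwv (what t)
                  (fun i => (h (traj f x0 w i) + v i) - h (traj f (xhat0 t) (what t) i)) t
            ≤ lx (x0 - xbar0) * ((t : ℝ) + 1) ^ (-b₂) + lwv w v t) →
          ∀ t : ℕ,
            ‖traj f x0 w t - traj f (xhat0 t) (what t) t‖ ≤
              βx ‖x0 - xbar0‖ t + αw (seqSup w t) + αv (seqSup v (t + 1)) :=
  fie_rgas_polynomial_general n g p f h c₁ a₁ b₁ hc₁ ha₁ hb₁ α₁ α₂ hα₁ hα₂ hIOSS c₂ a₂ b₂ hc₂ ha₂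
    hb₂ lx lwv γ'x hγ'x hlx γₗw γₗv γᵤw γᵤv hγₗw hγₗv hγᵤw hγᵤv hlwv hab
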